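/- arXiv:2402.12838 — 3 statements merged into one kernel-verified Lean document; each statement's English description precedes it below -/
import Mathlib

section
/- Let Y be an integrable real random variable whose law on ℝ has a density function f with respect to Lebesgue measure, let m₀ ∈ ℝ be a median of Y (ℙ(Y ≤ m₀) = 1/2), and let m ∈ ℝ. Suppose there are constants 0 < c₁ ≤ c₂ such that c₁ ≤ f(t) ≤ c₂ for Lebesgue-almost every t between m₀ and m (i.e., on the interval [min(m₀,m), max(m₀,m)]). Then c₁ (m − m₀)² ≤ E[|Y − m|] − E[|Y − m₀|] ≤ c₂ (m − m₀)². -/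
/-!
Write `ν` for the law of `Y`. Pointwise,
`|y - m| - |y - m₀| = (m - m₀) (2·1{y ≤ m₀} - 1) + 2 |y - m| · 1{y ∈ Ι m₀ m}`,
and the first term has `ν`-mean zero because `m₀` is a median. Hence the excess risk is
`∫ y in Ι m₀ m, 2 |y - m| ∂ν`, and since `ν` has density between `c₁` and `c₂` on that interval
it lies between `c₁` and `c₂` times the Lebesgue integral `∫ y in Ι m₀ m, 2 |y - m| = (m - m₀)²`.
-/

open MeasureTheory Set
open scoped Interval

section DensityBounds

variable {α : Type*} [MeasurableSpace α] {μ : Measure α} {f : α → ℝ} {s : Set α}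

lemma smul_restrict_le_withDensity_restrict {c : ℝ} (hs : MeasurableSet s)
    (hf : ∀ᵐ t ∂μ.restrict s, c ≤ f t) :
    ENNReal.ofReal c • μ.restrict s ≤
      (μ.withDensity fun t => ENNReal.ofReal (f t)).restrict s := by
  rw [restrict_withDensity hs, ← withDensity_const]
  exact withDensity_mono (hf.mono fun _ ht => ENNReal.ofReal_le_ofReal ht)

lemma withDensity_restrict_le_smul_restrict {c : ℝ} (hs : MeasurableSet s)
    (hf : ∀ᵐ t ∂μ.restrict s, f t ≤ c) :
    (μ.withDensity fun t => ENNReal.ofReal (f t)).restrict s ≤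
      ENNReal.ofReal c • μ.restrict s := by
  rw [restrict_withDensity hs, ← withDensity_const]
  exact withDensity_mono (hf.mono fun _ ht => ENNReal.ofReal_le_ofReal ht)

lemma setIntegral_withDensity_mem_Icc {c₁ c₂ : ℝ} {g : α → ℝ} (hs : MeasurableSet s)
    (hc₁ : 0 ≤ c₁) (hc₁₂ : c₁ ≤ c₂) (hf : ∀ᵐ t ∂μ.restrict s, c₁ ≤ f t ∧ f t ≤ c₂)
    (hg : 0 ≤ᵐ[μ.restrict s] g) (hgi : IntegrableOn g s μ) :
    c₁ * ∫ t in s, g t ∂μ ≤ ∫ t in s, g t ∂μ.withDensity (fun t => ENNReal.ofReal (f t)) ∧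
      ∫ t in s, g t ∂μ.withDensity (fun t => ENNReal.ofReal (f t)) ≤ c₂ * ∫ t in s, g t ∂μ := by
  have hlow := smul_restrict_le_withDensity_restrict hs (hf.mono fun _ ht => ht.1)
  have hupp := withDensity_restrict_le_smul_restrict hs (hf.mono fun _ ht => ht.2)
  have hgi₂ : Integrable g (ENNReal.ofReal c₂ • μ.restrict s) :=
    hgi.smul_measure ENNReal.ofReal_ne_top
  have hg₂ : 0 ≤ᵐ[ENNReal.ofReal c₂ • μ.restrict s] g := Measure.ae_smul_measure hg _
  constructor
  · have := integral_mono_measure hlow (ae_mono hupp hg₂) (hgi₂.mono_measure hupp)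
    rwa [integral_smul_measure, ENNReal.toReal_ofReal hc₁, smul_eq_mul] at this
  · have := integral_mono_measure hupp hg₂ hgi₂
    rwa [integral_smul_measure, ENNReal.toReal_ofReal (hc₁.trans hc₁₂), smul_eq_mul] at this

end DensityBounds

lemma abs_sub_sub_abs_sub_eq (a b y : ℝ) :
    |y - b| - |y - a| = (b - a) * (2 * (Iic a).indicator (1 : ℝ → ℝ) y - 1) +
      (Ι a b).indicator (fun y => 2 * |y - b|) y := by
  simp only [indicator, mem_Iic, mem_uIoc, Pi.one_apply]
  split_ifs <;> grind

lemma setIntegral_uIoc_two_mul_abs_sub (a b : ℝ) : ∫ y in Ι a b, 2 * |y - b| = (b - a) ^ 2 := by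
  rcases le_total a b with hab | hba
  · rw [uIoc_of_le hab, ← intervalIntegral.integral_of_le hab,
      intervalIntegral.integral_congr (g := fun y => 2 * (b - y)) fun y hy => by
        rw [uIcc_of_le hab] at hy
        simp only [abs_of_nonpos (sub_nonpos.2 hy.2), neg_sub],
      intervalIntegral.integral_const_mul, intervalIntegral.integral_comp_sub_left fun y => y,
      sub_self, integral_id]
    ring
  · rw [uIoc_of_ge hba, ← intervalIntegral.integral_of_le hba,
      intervalIntegral.integral_congr (g := fun y => 2 * (y - b)) fun y hy => by
        rw [uIcc_of_le hba] at hy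
        simp only [abs_of_nonneg (sub_nonneg.2 hy.1)],
      intervalIntegral.integral_const_mul, intervalIntegral.integral_comp_sub_right fun y => y,
      sub_self, integral_id]
    ring

section Median

variable {ν : Measure ℝ} [IsProbabilityMeasure ν] {a : ℝ}

lemma integral_two_mul_indicator_Iic_sub_one_of_median (ha : ν (Iic a) = 1 / 2) :
    ∫ y, (2 * (Iic a).indicator (1 : ℝ → ℝ) y - 1) ∂ν = 0 := by
  have hind : Integrable ((Iic a).indicator (1 : ℝ → ℝ)) ν :=
    (integrable_const 1).indicator measurableSet_Iic
  rw [integral_sub (hind.const_mul 2) (integrable_const 1), integral_const_mul,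
    integral_indicator_one measurableSet_Iic, measureReal_def, ha]
  simp

lemma integral_abs_sub_sub_integral_abs_sub_of_median (hν : Integrable id ν)
    (ha : ν (Iic a) = 1 / 2) (b : ℝ) :
    ∫ y, |y - b| ∂ν - ∫ y, |y - a| ∂ν = ∫ y in Ι a b, 2 * |y - b| ∂ν := by
  have hsign : Integrable (fun y => (b - a) * (2 * (Iic a).indicator (1 : ℝ → ℝ) y - 1)) ν :=
    ((((integrable_const 1).indicator measurableSet_Iic).const_mul 2).sub
      (integrable_const 1)).const_mul _
  have hcorr : IntegrableOn (fun y => 2 * |y - b|) (Ι a b) ν :=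
    (continuous_const.mul (continuous_id.sub continuous_const).abs).integrableOn_uIoc
  have habs (c : ℝ) : Integrable (fun y => |y - c|) ν := (hν.sub (integrable_const c)).abs
  rw [← integral_sub (habs b) (habs a)]
  simp_rw [abs_sub_sub_abs_sub_eq a b]
  rw [integral_add hsign (hcorr.integrable_indicator measurableSet_uIoc),
    integral_const_mul, integral_two_mul_indicator_Iic_sub_one_of_median ha, mul_zero, zero_add,
    integral_indicator measurableSet_uIoc]

end Median

theorem mad_lipschitz_risk_general
    {Ω : Type*} [MeasurableSpace Ω] (μpr : Measure Ω) [IsProbabilityMeasure μpr]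
    (Y : Ω → ℝ) (hint : Integrable Y μpr)
    (f : ℝ → ℝ)
    (hdensity : Measure.map Y μpr
      = MeasureTheory.volume.withDensity (fun t => ENNReal.ofReal (f t)))
    (m₀ : ℝ) (hmed : μpr {ω | Y ω ≤ m₀} = 1 / 2)
    (m : ℝ) (c₁ c₂ : ℝ) (hc₁ : 0 < c₁) (hc₁₂ : c₁ ≤ c₂)
    (hbound : ∀ᵐ t ∂(MeasureTheory.volume.restrict (Set.uIcc m₀ m)),
      c₁ ≤ f t ∧ f t ≤ c₂) :
    c₁ * (m - m₀) ^ 2 ≤ (∫ ω, |Y ω - m| ∂μpr) - (∫ ω, |Y ω - m₀| ∂μpr) ∧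
    (∫ ω, |Y ω - m| ∂μpr) - (∫ ω, |Y ω - m₀| ∂μpr) ≤ c₂ * (m - m₀) ^ 2 := by
  have hY := hint.aemeasurable
  have : IsProbabilityMeasure (μpr.map Y) := Measure.isProbabilityMeasure_map hY
  have hlaw : Integrable id (μpr.map Y) :=
    (integrable_map_measure aestronglyMeasurable_id hY).2 hint
  have hlaw_med : μpr.map Y (Iic m₀) = 1 / 2 := by
    rwa [Measure.map_apply_of_aemeasurable hY measurableSet_Iic]
  have hexcess : (∫ ω, |Y ω - m| ∂μpr) - (∫ ω, |Y ω - m₀| ∂μpr) =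
      ∫ y in Ι m₀ m, 2 * |y - m| ∂μpr.map Y := by
    rw [← integral_abs_sub_sub_integral_abs_sub_of_median hlaw hlaw_med m,
      integral_map hY (by fun_prop), integral_map hY (by fun_prop)]
  rw [hexcess, hdensity, ← setIntegral_uIoc_two_mul_abs_sub m₀ m]
  exact setIntegral_withDensity_mem_Icc measurableSet_uIoc hc₁.le hc₁₂
    (ae_restrict_of_ae_restrict_of_subset uIoc_subset_uIcc hbound)
    (ae_of_all _ fun y => by positivity)
    (continuous_const.mul (continuous_id.sub continuous_const).abs).integrableOn_uIoc

/-- Verification of the Lipschitz risk condition (Assumption A3) for the MAD loss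
(Section 2.2 of the paper): if `Y` has a density bounded between `c₁` and `c₂` on the
interval between a median `m₀` and a prediction `m`, then the excess MAD risk is
sandwiched between `c₁ (m − m₀)²` and `c₂ (m − m₀)²`. -/
theorem mad_lipschitz_risk
    {Ω : Type*} [MeasurableSpace Ω] (μpr : Measure Ω) [IsProbabilityMeasure μpr]
    (Y : Ω → ℝ) (hY : Measurable Y) (hint : Integrable Y μpr)
    (f : ℝ → ℝ)
    (hdensity : Measure.map Y μpr
      = MeasureTheory.volume.withDensity (fun t => ENNReal.ofReal (f t)))
    (m₀ : ℝ) (hmed : μpr {ω | Y ω ≤ m₀} = 1 / 2)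
    (m : ℝ) (c₁ c₂ : ℝ) (hc₁ : 0 < c₁) (hc₁₂ : c₁ ≤ c₂)
    (hbound : ∀ᵐ t ∂(MeasureTheory.volume.restrict (Set.uIcc m₀ m)),
      c₁ ≤ f t ∧ f t ≤ c₂) :
    c₁ * (m - m₀) ^ 2 ≤ (∫ ω, |Y ω - m| ∂μpr) - (∫ ω, |Y ω - m₀| ∂μpr) ∧
    (∫ ω, |Y ω - m| ∂μpr) - (∫ ω, |Y ω - m₀| ∂μpr) ≤ c₂ * (m - m₀) ^ 2 :=
  mad_lipschitz_risk_general μpr Y hint f hdensity m₀ hmed m c₁ c₂ hc₁ hc₁₂ hbound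
end

section
/- Let Λ(u) = eᵘ/(1 + eᵘ) be the logistic function and define the cross-entropy risk increment ℓ̄(q, m) = −q·m + log(1 + eᵐ) for q ∈ (0,1), m ∈ ℝ. Then: (i) for all a, b ∈ ℝ, ℓ̄(Λ(a), b) − ℓ̄(Λ(a), a) ≤ (b − a)²/8; and (ii) for every F > 0 and all a, b ∈ [−F, F], ℓ̄(Λ(a), b) − ℓ̄(Λ(a), a) ≥ ( e^F / (2(1 + e^F)²) ) · (b − a)². -/
/-- The logistic function Λ(u) = eᵘ / (1 + eᵘ). -/
noncomputable def logistic (u : ℝ) : ℝ := Real.exp u / (1 + Real.exp u)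

/-- Cross-entropy risk increment ℓ̄(q, m) = −q·m + log(1 + eᵐ). -/
noncomputable def crossEntropyRisk (q m : ℝ) : ℝ := -q * m + Real.log (1 + Real.exp m)

/-!
With `g u = log (1 + eᵘ)` we have `g' = Λ`, so the excess risk `ℓ̄(Λ a, b) - ℓ̄(Λ a, a)` is the
Bregman divergence `g b - g a - g' a (b - a)` of `g`. A Bregman divergence is squeezed between
`m/2 (b - a)²` and `M/2 (b - a)²` whenever `m ≤ g'' ≤ M` between `a` and `b`, and here
`g'' = Λ' = 1 / (2 + 2 cosh)`, which is at most `1/4` everywhere and at least `1 / (2 + 2 cosh F)`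
on `[-F, F]`.
-/

open Real Set

noncomputable def bregman (f f' : ℝ → ℝ) (a b : ℝ) : ℝ := f b - f a - f' a * (b - a)

lemma le_of_forall_hasDerivAt_mul_sub_nonneg {φ φ' : ℝ → ℝ} {s : Set ℝ} {a b : ℝ}
    (hs : s.OrdConnected) (ha : a ∈ s) (hb : b ∈ s) (hφ : ∀ t ∈ s, HasDerivAt φ (φ' t) t)
    (hsign : ∀ t ∈ s, 0 ≤ φ' t * (t - a)) : φ a ≤ φ b := by
  have hcont (u v : ℝ) (hu : u ∈ s) (hv : v ∈ s) : ContinuousOn φ (Icc u v) := fun t ht =>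
    (hφ t (hs.out hu hv ht)).continuousAt.continuousWithinAt
  have hderiv (u v : ℝ) (hu : u ∈ s) (hv : v ∈ s) :
      ∀ t ∈ interior (Icc u v), HasDerivWithinAt φ (φ' t) (interior (Icc u v)) t :=
    fun t ht => (hφ t (hs.out hu hv (interior_subset ht))).hasDerivWithinAt
  rcases le_total a b with hab | hba
  · refine monotoneOn_of_hasDerivWithinAt_nonneg (convex_Icc a b) (hcont a b ha hb)
      (hderiv a b ha hb) (fun t ht => ?_) (left_mem_Icc.2 hab) (right_mem_Icc.2 hab) hab
    rw [interior_Icc] at ht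
    exact nonneg_of_mul_nonneg_left (hsign t (hs.out ha hb (Ioo_subset_Icc_self ht)))
      (sub_pos.2 ht.1)
  · refine antitoneOn_of_hasDerivWithinAt_nonpos (convex_Icc b a) (hcont b a hb ha)
      (hderiv b a hb ha) (fun t ht => ?_) (left_mem_Icc.2 hba) (right_mem_Icc.2 hba) hba
    rw [interior_Icc] at ht
    exact nonpos_of_mul_nonneg_left (hsign t (hs.out hb ha (Ioo_subset_Icc_self ht)))
      (sub_neg.2 ht.2)

lemma half_mul_sq_le_bregman {f f' f'' : ℝ → ℝ} {s : Set ℝ} {K a b : ℝ}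
    (hs : s.OrdConnected) (ha : a ∈ s) (hb : b ∈ s)
    (hf : ∀ t ∈ s, HasDerivAt f (f' t) t) (hf' : ∀ t ∈ s, HasDerivAt f' (f'' t) t)
    (hK : ∀ t ∈ s, K ≤ f'' t) :
    K / 2 * (b - a) ^ 2 ≤ bregman f f' a b := by
  have hmono : MonotoneOn (fun t => f' t - K * t) s :=
    monotoneOn_of_hasDerivWithinAt_nonneg hs.convex
      (fun t ht => (hf' t ht).continuousAt.continuousWithinAt.sub
        (continuousWithinAt_id.const_mul K))
      (fun t ht => (((hf' t (interior_subset ht)).sub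
        ((hasDerivAt_id t).const_mul K)).hasDerivWithinAt).congr_deriv (by simp))
      (fun t ht => sub_nonneg.2 (hK t (interior_subset ht)))
  have key : f a - f' a * a - K / 2 * (a - a) ^ 2 ≤ f b - f' a * b - K / 2 * (b - a) ^ 2 := by
    refine le_of_forall_hasDerivAt_mul_sub_nonneg hs ha hb
      (φ := fun t => f t - f' a * t - K / 2 * (t - a) ^ 2)
      (φ' := fun t => (f' t - K * t) - (f' a - K * a)) (fun t ht => ?_) (fun t ht => ?_)
    · refine (((hf t ht).sub ((hasDerivAt_id' t).const_mul (f' a))).sub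
        ((((hasDerivAt_id' t).sub_const a).pow 2).const_mul (K / 2))).congr_deriv ?_
      push_cast
      ring
    · rcases le_total a t with hat | hta
      · exact mul_nonneg (sub_nonneg.2 (hmono ha ht hat)) (sub_nonneg.2 hat)
      · exact mul_nonneg_of_nonpos_of_nonpos (sub_nonpos.2 (hmono ht ha hta)) (sub_nonpos.2 hta)
  unfold bregman
  linarith

lemma bregman_le_half_mul_sq {f f' f'' : ℝ → ℝ} {s : Set ℝ} {K a b : ℝ}
    (hs : s.OrdConnected) (ha : a ∈ s) (hb : b ∈ s)
    (hf : ∀ t ∈ s, HasDerivAt f (f' t) t) (hf' : ∀ t ∈ s, HasDerivAt f' (f'' t) t)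
    (hK : ∀ t ∈ s, f'' t ≤ K) :
    bregman f f' a b ≤ K / 2 * (b - a) ^ 2 := by
  have := half_mul_sq_le_bregman (f := fun t => -f t) (f' := fun t => -f' t)
    (f'' := fun t => -f'' t) (K := -K) hs ha hb (fun t ht => (hf t ht).neg)
    (fun t ht => (hf' t ht).neg) (fun t ht => neg_le_neg (hK t ht))
  unfold bregman at this ⊢
  linarith

lemma exp_div_one_add_exp_sq (t : ℝ) : exp t / (1 + exp t) ^ 2 = (2 + 2 * cosh t)⁻¹ := by
  rw [cosh_eq, exp_neg]
  field_simp
  ring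

lemma hasDerivAt_log_one_add_exp (t : ℝ) :
    HasDerivAt (fun u => log (1 + exp u)) (logistic t) t :=
  ((hasDerivAt_exp t).const_add 1).log (by positivity)

lemma hasDerivAt_logistic (t : ℝ) : HasDerivAt logistic (2 + 2 * cosh t)⁻¹ t := by
  rw [← exp_div_one_add_exp_sq]
  exact ((hasDerivAt_exp t).div ((hasDerivAt_exp t).const_add 1) (by positivity)).congr_deriv
    (by ring)

lemma inv_two_add_two_mul_cosh_le (t : ℝ) : (2 + 2 * cosh t)⁻¹ ≤ 4⁻¹ := by
  have := one_le_cosh t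
  gcongr
  linarith

lemma inv_two_add_two_mul_cosh_le_of_abs_le {t F : ℝ} (h : |t| ≤ |F|) :
    (2 + 2 * cosh F)⁻¹ ≤ (2 + 2 * cosh t)⁻¹ := by
  have := one_le_cosh t
  gcongr
  exact cosh_le_cosh.2 h

lemma crossEntropyRisk_logistic_sub (a b : ℝ) :
    crossEntropyRisk (logistic a) b - crossEntropyRisk (logistic a) a =
      bregman (fun u => log (1 + exp u)) logistic a b := by
  unfold crossEntropyRisk bregman
  ring

/-- Two-sided Lipschitz risk bound (Assumption A3) for the Cross-Entropy loss, as used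
in the Deep-learning application (Theorem 4.1): the excess pointwise risk of predicting
`b` when the true log-odds are `a` is at most `(b − a)²/8`, and at least
`(e^F / (2(1 + e^F)²)) (b − a)²` when `a, b ∈ [−F, F]`. -/
theorem cross_entropy_lipschitz_risk :
    (∀ a b : ℝ,
      crossEntropyRisk (logistic a) b - crossEntropyRisk (logistic a) a
        ≤ (b - a) ^ 2 / 8) ∧
    (∀ F : ℝ, 0 < F → ∀ a b : ℝ, a ∈ Set.Icc (-F) F → b ∈ Set.Icc (-F) F →
      (Real.exp F / (2 * (1 + Real.exp F) ^ 2)) * (b - a) ^ 2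
        ≤ crossEntropyRisk (logistic a) b - crossEntropyRisk (logistic a) a) := by
  refine ⟨fun a b => ?_, fun F _ a b ha hb => ?_⟩
  · rw [crossEntropyRisk_logistic_sub]
    calc bregman (fun u => log (1 + exp u)) logistic a b ≤ 4⁻¹ / 2 * (b - a) ^ 2 :=
          bregman_le_half_mul_sq ordConnected_univ (mem_univ a) (mem_univ b)
            (fun t _ => hasDerivAt_log_one_add_exp t) (fun t _ => hasDerivAt_logistic t)
            (fun t _ => inv_two_add_two_mul_cosh_le t)
      _ = (b - a) ^ 2 / 8 := by ring
  · rw [crossEntropyRisk_logistic_sub]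
    calc exp F / (2 * (1 + exp F) ^ 2) * (b - a) ^ 2
          = (2 + 2 * cosh F)⁻¹ / 2 * (b - a) ^ 2 := by
            rw [← exp_div_one_add_exp_sq, div_div, mul_comm 2]
      _ ≤ bregman (fun u => log (1 + exp u)) logistic a b :=
          half_mul_sq_le_bregman ordConnected_Icc ha hb
            (fun t _ => hasDerivAt_log_one_add_exp t) (fun t _ => hasDerivAt_logistic t)
            (fun t ht => inv_two_add_two_mul_cosh_le_of_abs_le
              ((abs_le.2 ht).trans (le_abs_self F)))
end

section
/- Let R, p ∈ ℕ, X an R × p real matrix, θ₀ ∈ ℝᵖ with support S = {j : θ₀ⱼ ≠ 0} of cardinality at most s ≥ 1, ε ∈ ℝᴿ, Y = Xθ₀ + ε, and λ > 0. Suppose θ̂ ∈ ℝᵖ minimizes L(θ) = (1/R)‖Y − Xθ‖² + λ‖θ‖₁ over ℝᵖ, that ‖(2/R) Xᵀε‖_∞ ≤ λ/2, and that the compatibility (restricted eigenvalue) condition holds with constant φ > 0: for every δ ∈ ℝᵖ with ‖δ_{Sᶜ}‖₁ ≤ 3‖δ_S‖₁ one has φ² ‖δ_S‖₁² ≤ s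 · (1/R)‖Xδ‖², where δ_S denotes the vector agreeing with δ on S and zero off S. Then, with δ = θ̂ − θ₀: (i) ‖δ_{Sᶜ}‖₁ ≤ 3‖δ_S‖₁; (ii) (1/R)‖Xδ‖² ≤ (9/4) λ² s / φ²; and (iii) ‖δ‖₁ ≤ 6 λ s / φ². -/
open Finset

set_option maxHeartbeats 1000000 in
/-- The deterministic fast-rate (oracle) inequality for the Lasso under the
compatibility / restricted-eigenvalue condition (source of the fast rates in
Assumptions A4 and A6 of the paper). -/
theorem lasso_fast_rate
    (R p : ℕ) (X : Matrix (Fin R) (Fin p) ℝ)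
    (θ₀ : Fin p → ℝ) (ε : Fin R → ℝ) (Y : Fin R → ℝ)
    (hY : Y = X.mulVec θ₀ + ε)
    (S : Finset (Fin p)) (hS : S = Finset.univ.filter (fun j => θ₀ j ≠ 0))
    (s : ℕ) (hs : 1 ≤ s) (hcard : S.card ≤ s)
    (lam : ℝ) (hlam : 0 < lam)
    (θhat : Fin p → ℝ)
    (hmin : ∀ θ : Fin p → ℝ,
      (1 / (R : ℝ)) * ∑ i, (Y i - X.mulVec θhat i) ^ 2 + lam * ∑ j, |θhat j|
        ≤ (1 / (R : ℝ)) * ∑ i, (Y i - X.mulVec θ i) ^ 2 + lam * ∑ j, |θ j|)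
    (hnoise : ∀ j : Fin p, |(2 / (R : ℝ)) * ∑ i, X i j * ε i| ≤ lam / 2)
    (φ : ℝ) (hφ : 0 < φ)
    (hcompat : ∀ δ : Fin p → ℝ,
      (∑ j ∈ Sᶜ, |δ j|) ≤ 3 * ∑ j ∈ S, |δ j| →
        φ ^ 2 * (∑ j ∈ S, |δ j|) ^ 2
          ≤ (s : ℝ) * ((1 / (R : ℝ)) * ∑ i, (X.mulVec δ i) ^ 2)) :
    (∑ j ∈ Sᶜ, |(θhat - θ₀) j|) ≤ 3 * (∑ j ∈ S, |(θhat - θ₀) j|) ∧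
    (1 / (R : ℝ)) * ∑ i, (X.mulVec (θhat - θ₀) i) ^ 2
      ≤ (9 / 4) * lam ^ 2 * (s : ℝ) / φ ^ 2 ∧
    (∑ j, |(θhat - θ₀) j|) ≤ 6 * lam * (s : ℝ) / φ ^ 2 := by
  set δ : Fin p → ℝ := θhat - θ₀ with hδdef
  have hδ : ∀ j, δ j = θhat j - θ₀ j := fun j => rfl
  have hδi : ∀ i, X.mulVec δ i = X.mulVec θhat i - X.mulVec θ₀ i := by
    intro i; rw [hδdef, Matrix.mulVec_sub]; rfl
  have hRnn : (0:ℝ) ≤ 1 / (R:ℝ) := by positivity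
  set a := ∑ j ∈ S, |δ j| with hadef
  set b := ∑ j ∈ Sᶜ, |δ j| with hbdef
  set Q := (1 / (R:ℝ)) * ∑ i, (X.mulVec δ i) ^ 2 with hQdef
  have ha : 0 ≤ a := Finset.sum_nonneg fun j _ => abs_nonneg _
  have hb : 0 ≤ b := Finset.sum_nonneg fun j _ => abs_nonneg _
  have hQ : 0 ≤ Q :=
    mul_nonneg hRnn (Finset.sum_nonneg fun i _ => sq_nonneg _)
  -- basic inequality
  have h1 : ∀ i, Y i - X.mulVec θhat i = ε i - X.mulVec δ i := by
    intro i; rw [hY, hδi i]; simp [Pi.add_apply]; ring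
  have h2 : ∀ i, Y i - X.mulVec θ₀ i = ε i := by
    intro i; rw [hY]; simp [Pi.add_apply]
  have hbasic := hmin θ₀
  have eL : ∑ i, (Y i - X.mulVec θhat i) ^ 2
      = ∑ i, (ε i) ^ 2 - 2 * ∑ i, ε i * X.mulVec δ i + ∑ i, (X.mulVec δ i) ^ 2 := by
    calc ∑ i, (Y i - X.mulVec θhat i) ^ 2
        = ∑ i, ((ε i) ^ 2 - 2 * (ε i * X.mulVec δ i) + (X.mulVec δ i) ^ 2) :=
          Finset.sum_congr rfl fun i _ => by rw [h1 i]; ring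
      _ = ∑ i, (ε i) ^ 2 - 2 * ∑ i, ε i * X.mulVec δ i + ∑ i, (X.mulVec δ i) ^ 2 := by
          rw [Finset.sum_add_distrib, Finset.sum_sub_distrib, ← Finset.mul_sum]
  have eR : ∑ i, (Y i - X.mulVec θ₀ i) ^ 2 = ∑ i, (ε i) ^ 2 :=
    Finset.sum_congr rfl fun i _ => by rw [h2 i]
  rw [eL, eR] at hbasic
  have key : Q + lam * ∑ j, |θhat j|
      ≤ (2 / (R:ℝ)) * ∑ i, ε i * X.mulVec δ i + lam * ∑ j, |θ₀ j| := by
    have e : (1 / (R:ℝ)) * (∑ i, (ε i) ^ 2 - 2 * ∑ i, ε i * X.mulVec δ i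
        + ∑ i, (X.mulVec δ i) ^ 2)
        = (1 / (R:ℝ)) * ∑ i, (ε i) ^ 2
          - (2 / (R:ℝ)) * ∑ i, ε i * X.mulVec δ i + Q := by
      rw [hQdef]; ring
    rw [e] at hbasic
    linarith
  -- swap sums for the cross term
  have hswap : (2 / (R:ℝ)) * ∑ i, ε i * X.mulVec δ i
      = ∑ j, δ j * ((2 / (R:ℝ)) * ∑ i, X i j * ε i) := by
    simp only [Matrix.mulVec, dotProduct, Finset.mul_sum, Finset.sum_mul]
    rw [Finset.sum_comm]
    exact Finset.sum_congr rfl fun j _ => Finset.sum_congr rfl fun i _ => by ring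
  have hcross : (2 / (R:ℝ)) * ∑ i, ε i * X.mulVec δ i ≤ (lam / 2) * ∑ j, |δ j| := by
    rw [hswap, Finset.mul_sum]
    refine Finset.sum_le_sum fun j _ => ?_
    calc δ j * ((2 / (R:ℝ)) * ∑ i, X i j * ε i)
        ≤ |δ j * ((2 / (R:ℝ)) * ∑ i, X i j * ε i)| := le_abs_self _
      _ = |δ j| * |(2 / (R:ℝ)) * ∑ i, X i j * ε i| := abs_mul _ _
      _ ≤ |δ j| * (lam / 2) := mul_le_mul_of_nonneg_left (hnoise j) (abs_nonneg _)
      _ = lam / 2 * |δ j| := mul_comm _ _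
  -- support facts
  have hθ₀off : ∀ j ∈ Sᶜ, θ₀ j = 0 := by
    intro j hj
    rw [hS, Finset.mem_compl, Finset.mem_filter] at hj
    push_neg at hj
    exact hj (Finset.mem_univ j)
  have hsplit : ∀ v : Fin p → ℝ, ∑ j, |v j| = ∑ j ∈ S, |v j| + ∑ j ∈ Sᶜ, |v j| :=
    fun v => (Finset.sum_add_sum_compl S _).symm
  have hhatoff : ∑ j ∈ Sᶜ, |θhat j| = b := by
    rw [hbdef]
    exact Finset.sum_congr rfl fun j hj => by rw [hδ j, hθ₀off j hj, sub_zero]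
  have hθ₀offsum : ∑ j ∈ Sᶜ, |θ₀ j| = 0 :=
    Finset.sum_eq_zero fun j hj => by rw [hθ₀off j hj, abs_zero]
  have htri : ∑ j ∈ S, |θ₀ j| ≤ ∑ j ∈ S, |θhat j| + a := by
    rw [hadef, ← Finset.sum_add_distrib]
    refine Finset.sum_le_sum fun j _ => ?_
    rw [hδ j]
    calc |θ₀ j| = |θhat j - (θhat j - θ₀ j)| := by ring_nf
      _ ≤ |θhat j| + |θhat j - θ₀ j| := abs_sub _ _
  -- combine
  have hmain : Q + (lam / 2) * b ≤ (3 * lam / 2) * a := by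
    have e1 : ∑ j, |θhat j| = ∑ j ∈ S, |θhat j| + b := by rw [hsplit θhat, hhatoff]
    have e2 : ∑ j, |θ₀ j| = ∑ j ∈ S, |θ₀ j| := by rw [hsplit θ₀, hθ₀offsum, add_zero]
    have e3 : ∑ j, |δ j| = a + b := by rw [hsplit δ, ← hadef, ← hbdef]
    have h4 : lam * ∑ j, |θ₀ j| ≤ lam * (∑ j ∈ S, |θhat j| + a) := by
      rw [e2]; exact mul_le_mul_of_nonneg_left htri hlam.le
    rw [e1] at key
    rw [e3] at hcross
    linarith [key, hcross, h4]
  have cone : b ≤ 3 * a := by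
    have hlb : lam * b ≤ lam * (3 * a) := by linarith [hQ]
    exact le_of_mul_le_mul_left hlb hlam
  have compat := hcompat δ cone
  have hQa : Q ≤ (3 * lam / 2) * a := by linarith [mul_nonneg hlam.le hb]
  have hφ2 : (0:ℝ) < φ ^ 2 := by positivity
  have hsnn : (0:ℝ) ≤ (s:ℝ) := Nat.cast_nonneg s
  have habound : a ≤ 3 * lam * (s:ℝ) / (2 * φ ^ 2) := by
    rcases eq_or_lt_of_le ha with h | h
    · rw [← h]; positivity
    · have h5 : φ ^ 2 * a ^ 2 ≤ (s:ℝ) * ((3 * lam / 2) * a) := by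
        calc φ ^ 2 * a ^ 2 ≤ (s:ℝ) * Q := compat
          _ ≤ (s:ℝ) * ((3 * lam / 2) * a) := mul_le_mul_of_nonneg_left hQa hsnn
      have h6 : (φ ^ 2 * a) * a ≤ ((s:ℝ) * (3 * lam / 2)) * a := by
        calc (φ ^ 2 * a) * a = φ ^ 2 * a ^ 2 := by ring
          _ ≤ (s:ℝ) * ((3 * lam / 2) * a) := h5
          _ = ((s:ℝ) * (3 * lam / 2)) * a := by ring
      have h7 : φ ^ 2 * a ≤ (s:ℝ) * (3 * lam / 2) := le_of_mul_le_mul_right h6 h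
      rw [le_div_iff₀ (by positivity)]
      linarith [h7]
  refine ⟨cone, ?_, ?_⟩
  · calc Q ≤ (3 * lam / 2) * a := hQa
      _ ≤ (3 * lam / 2) * (3 * lam * (s:ℝ) / (2 * φ ^ 2)) :=
          mul_le_mul_of_nonneg_left habound (by positivity)
      _ = 9 / 4 * lam ^ 2 * (s:ℝ) / φ ^ 2 := by field_simp; ring
  · calc ∑ j, |δ j| = a + b := by rw [hsplit δ, ← hadef, ← hbdef]
      _ ≤ 4 * a := by linarith
      _ ≤ 4 * (3 * lam * (s:ℝ) / (2 * φ ^ 2)) :=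
          mul_le_mul_of_nonneg_left habound (by norm_num)
      _ = 6 * lam * (s:ℝ) / φ ^ 2 := by field_simp; ring
end
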